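/- Sharp local structure of ℓp balls for p ∈ (0, 1): let d ≥ 1, p ∈ (0, 1), and fix ε with d^{−(2−p)/(2p)} ≤ ε ≤ 1. Set s = ⌈ε^{−2p/(2−p)}⌉. Then the following inclusions hold: ε · conv_p(B_0^d(s) ∩ B₂^d) ⊆ C_d(p, ε) ⊆ 3ε · conv(B_0^d(s) ∩ B₂^d). Consequently, with Φ_{p,ε}(ξ) = sup_{x ∈ C_d(p,ε)} ⟨x, ξ⟩ for ξ ∼ N(0, I_d), one has ε² · E[max_{S ⊆ {1,…,d}, |S| ≤ s} Σ_{i∈S} ξ_i²] ≤ ‖Φ_{p,ε}‖_{L²}² ≤ 9ε² · E[max_{S ⊆ {1,…,d}, |S| ≤ s} Σ_{i∈S} ξ_i²]. -/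

import Mathlib

open MeasureTheory ProbabilityTheory Real Filter Pointwise
open scoped ENNReal NNReal

noncomputable section

/-- The standard Gaussian measure `N(0, I_d)` on `ℝ^d`. -/
def stdGaussian (d : ℕ) : Measure (Fin d → ℝ) :=
  Measure.pi fun _ => gaussianReal 0 1

/-- Squared Euclidean distance on `ℝ^d`. -/
def sqDist {d : ℕ} (x y : Fin d → ℝ) : ℝ := ∑ i, (x i - y i) ^ 2

/-- The ℓp (quasi)norm, for `0 < p < ∞`. -/
def pNorm {d : ℕ} (p : ℝ) (x : Fin d → ℝ) : ℝ := (∑ i, |x i| ^ p) ^ (1 / p)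

/-- The unit ℓp ball in `ℝ^d`. -/
def lpBall (d : ℕ) (p : ℝ) : Set (Fin d → ℝ) := {x | pNorm p x ≤ 1}

/-- `proj` is a Euclidean projection onto `Θ`: it takes values in `Θ` and
minimizes the Euclidean distance to `Θ`. -/
def IsProjOn {d : ℕ} (Θ : Set (Fin d → ℝ)) (proj : (Fin d → ℝ) → Fin d → ℝ) : Prop :=
  ∀ y, proj y ∈ Θ ∧ ∀ ϑ ∈ Θ, sqDist y (proj y) ≤ sqDist y ϑ

/-- The risk `E‖θhat(θ + σξ) − θ‖₂²` of an estimator at `θ`. -/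
def risk {d : ℕ} (θhat : (Fin d → ℝ) → Fin d → ℝ) (σ : ℝ) (θ : Fin d → ℝ) : ℝ≥0∞ :=
  ∫⁻ ξ, ENNReal.ofReal (sqDist (θhat (θ + σ • ξ)) θ) ∂(stdGaussian d)

/-- Worst-case (supremum) risk of an estimator over `Θ`. -/
def supRisk {d : ℕ} (Θ : Set (Fin d → ℝ)) (θhat : (Fin d → ℝ) → Fin d → ℝ) (σ : ℝ) : ℝ≥0∞ :=
  ⨆ θ ∈ Θ, risk θhat σ θ

/-- Minimax risk over `Θ`: infimum over measurable estimators of the worst-case risk. -/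
def minimax {d : ℕ} (Θ : Set (Fin d → ℝ)) (σ : ℝ) : ℝ≥0∞ :=
  ⨅ θhat ∈ {f : (Fin d → ℝ) → Fin d → ℝ | Measurable f}, supRisk Θ θhat σ

open Classical in
/-- The set `B_0^d(s)` of `s`-sparse vectors in `ℝ^d`. -/
def sparseSet (d s : ℕ) : Set (Fin d → ℝ) :=
  {x | (Finset.univ.filter fun i => x i ≠ 0).card ≤ s}

/-- The Euclidean unit ball in `ℝ^d`. -/
def euclBall (d : ℕ) : Set (Fin d → ℝ) := {x | Real.sqrt (∑ i, x i ^ 2) ≤ 1}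

/-- The localized set `C_d(p, ε) = {x : ‖x‖_p^p ≤ 2, ‖x‖₂ ≤ ε}`. -/
def Cset (d : ℕ) (p ε : ℝ) : Set (Fin d → ℝ) :=
  {x | (∑ i, |x i| ^ p) ≤ 2 ∧ Real.sqrt (∑ i, x i ^ 2) ≤ ε}

/-- The `p`-th order convex hull of a set `T ⊆ ℝ^d`. -/
def pConvexHull {d : ℕ} (p : ℝ) (T : Set (Fin d → ℝ)) : Set (Fin d → ℝ) :=
  {x | ∃ (m : ℕ) (lam : Fin m → ℝ) (t : Fin m → Fin d → ℝ),
    (∀ j, t j ∈ T) ∧ (∀ j, 0 ≤ lam j) ∧ (∑ j, lam j ^ p) = 1 ∧ x = ∑ j, lam j • t j}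

/-- The random supremum `Φ_{p,ε}(ξ) = sup_{x ∈ C_d(p,ε)} ⟨x, ξ⟩`. -/
def Phi {d : ℕ} (p ε : ℝ) (ξ : Fin d → ℝ) : ℝ :=
  sSup ((fun x => ∑ i, x i * ξ i) '' Cset d p ε)

/-! For the inner inclusion, Hölder's inequality gives `‖t‖_p^p ≤ s^{1-p/2}` for every `s`-sparse
`t` in the Euclidean unit ball, and both `‖·‖_p^p` and `‖·‖₂` pass to `p`-convex combinations
because `∑ λ ≤ ∑ λ^p = 1`; the choice of `s` makes `ε^p s^{1-p/2} ≤ 2`.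

For the outer inclusion, cut `x` into blocks of `s` coordinates of decreasing size: each block
after the first has Euclidean norm at most `1/√s` times the `ℓ1` norm of the previous one, so
`x ∈ (‖x‖₂ + ‖x‖₁/√s) • conv(B₀(s) ∩ B₂)`, and interpolating between `ℓp` and `ℓ2` gives
`‖x‖₁/√s ≤ 2ε` on `C_d(p, ε)`.

The moment bounds hold pointwise in `ξ`: the support function of `B₀(s) ∩ B₂`, and of its convex
hull, is `max_{|S| ≤ s} ‖ξ_S‖₂`, and the two inclusions compare it with `Φ_{p,ε}`. -/

lemma Convex.smul_subset_smul_of_le {E : Type*} [AddCommGroup E] [Module ℝ E] {K : Set E}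
    (hK : Convex ℝ K) (h0 : (0 : E) ∈ K) {a b : ℝ} (ha : 0 ≤ a) (hab : a ≤ b) :
    a • K ⊆ b • K := fun x hx => by
  rw [← add_sub_cancel a b, hK.add_smul ha (sub_nonneg.2 hab)]
  exact ⟨x, hx, 0, ⟨0, h0, smul_zero _⟩, add_zero x⟩

lemma Finset.exists_subset_card_eq_forall_le {ι : Type*} [DecidableEq ι] (f : ι → ℝ)
    {U : Finset ι} {k : ℕ} (hk : k ≤ U.card) : ∃ S ⊆ U, S.card = k ∧ ∀ i ∈ S, ∀ j ∈ U \ S, f j ≤ f i := by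
  obtain ⟨S, hS, hmax⟩ := (U.powersetCard k).exists_max_image (fun S => ∑ i ∈ S, f i)
    (Finset.powersetCard_nonempty.2 hk)
  obtain ⟨hSU, hScard⟩ := Finset.mem_powersetCard.1 hS
  refine ⟨S, hSU, hScard, fun i hi j hj => not_lt.1 fun hlt => ?_⟩
  obtain ⟨hjU, hjS⟩ := Finset.mem_sdiff.1 hj
  have hj' : j ∉ S.erase i := fun h => hjS (Finset.mem_of_mem_erase h)
  have hswap : insert j (S.erase i) ∈ U.powersetCard k := by
    refine Finset.mem_powersetCard.2 ⟨Finset.insert_subset hjU ((S.erase_subset i).trans hSU), ?_⟩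
    rw [Finset.card_insert_of_notMem hj', Finset.card_erase_of_mem hi, hScard]
    have := hScard ▸ Finset.card_pos.2 ⟨i, hi⟩
    omega
  have := hmax _ hswap
  rw [Finset.sum_insert hj', Finset.sum_erase_eq_sub hi] at this
  linarith

namespace LpBall

open Finset

variable {d s : ℕ} {p ε : ℝ}

def euclNorm (x : Fin d → ℝ) : ℝ := √(∑ i, x i ^ 2)

def l1Norm (x : Fin d → ℝ) : ℝ := ∑ i, |x i|

open Classical in
def supp (x : Fin d → ℝ) : Finset (Fin d) := univ.filter fun i => x i ≠ 0

lemma mem_supp {x : Fin d → ℝ} {i : Fin d} : i ∈ supp x ↔ x i ≠ 0 := by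
  simp [supp]

lemma mem_sparseSet {x : Fin d → ℝ} : x ∈ sparseSet d s ↔ (supp x).card ≤ s := Iff.rfl

lemma mem_euclBall {x : Fin d → ℝ} : x ∈ euclBall d ↔ euclNorm x ≤ 1 := Iff.rfl

lemma sum_supp_eq_sum {x : Fin d → ℝ} {g : Fin d → ℝ} (hg : ∀ i, x i = 0 → g i = 0) :
    ∑ i ∈ supp x, g i = ∑ i, g i :=
  sum_subset (subset_univ _) fun i _ hi => hg i (by simpa [mem_supp] using hi)

lemma supp_subset_iff {x : Fin d → ℝ} {S : Finset (Fin d)} :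
    supp x ⊆ S ↔ ∀ i ∉ S, x i = 0 := by
  simp only [Finset.subset_iff, mem_supp]
  exact ⟨fun h i hi => by_contra fun h' => hi (h h'), fun h i hi => by_contra fun h' => hi (h i h')⟩

lemma euclNorm_nonneg (x : Fin d → ℝ) : 0 ≤ euclNorm x := Real.sqrt_nonneg _

lemma sq_euclNorm (x : Fin d → ℝ) : euclNorm x ^ 2 = ∑ i, x i ^ 2 :=
  Real.sq_sqrt (by positivity)

lemma euclNorm_eq_norm (x : Fin d → ℝ) : euclNorm x = ‖WithLp.toLp 2 x‖ := by
  simp [euclNorm, EuclideanSpace.norm_eq]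

lemma euclNorm_sum_le {ι : Type*} (t : Finset ι) (f : ι → Fin d → ℝ) :
    euclNorm (∑ j ∈ t, f j) ≤ ∑ j ∈ t, euclNorm (f j) := by
  simp only [euclNorm_eq_norm, WithLp.toLp_sum]
  exact norm_sum_le _ _

lemma euclNorm_smul (c : ℝ) (x : Fin d → ℝ) : euclNorm (c • x) = |c| * euclNorm x := by
  simp only [euclNorm_eq_norm, WithLp.toLp_smul, norm_smul, Real.norm_eq_abs]

lemma abs_le_euclNorm (x : Fin d → ℝ) (i : Fin d) : |x i| ≤ euclNorm x :=
  Real.abs_le_sqrt (single_le_sum (fun j _ => sq_nonneg (x j)) (mem_univ i))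

lemma euclNorm_le_sqrt_mul {x : Fin d → ℝ} {μ : ℝ} (hμ : 0 ≤ μ) (hx : (supp x).card ≤ s)
    (hb : ∀ i, |x i| ≤ μ) : euclNorm x ≤ √s * μ := by
  have hsum : ∑ i, x i ^ 2 ≤ s * μ ^ 2 :=
    calc ∑ i, x i ^ 2 = ∑ i ∈ supp x, x i ^ 2 := (sum_supp_eq_sum fun i hi => by simp [hi]).symm
      _ ≤ ∑ _i ∈ supp x, μ ^ 2 := sum_le_sum fun i _ => by
          rw [← sq_abs]
          exact pow_le_pow_left₀ (abs_nonneg _) (hb i) 2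
      _ ≤ s * μ ^ 2 := by
        rw [sum_const, nsmul_eq_mul]
        gcongr
  calc euclNorm x ≤ √(s * μ ^ 2) := Real.sqrt_le_sqrt hsum
    _ = √s * μ := by rw [Real.sqrt_mul (Nat.cast_nonneg s), Real.sqrt_sq hμ]

lemma l1Norm_nonneg (x : Fin d → ℝ) : 0 ≤ l1Norm x := sum_nonneg fun _ _ => abs_nonneg _

lemma abs_le_l1Norm (x : Fin d → ℝ) (i : Fin d) : |x i| ≤ l1Norm x :=
  single_le_sum (fun j _ => abs_nonneg (x j)) (mem_univ i)

lemma l1Norm_indicator (S : Finset (Fin d)) (x : Fin d → ℝ) :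
    l1Norm ((S : Set (Fin d)).indicator x) = ∑ i ∈ S, |x i| := by
  rw [l1Norm, ← sum_indicator_subset _ (subset_univ S)]
  exact sum_congr rfl fun i _ => by by_cases h : i ∈ S <;> simp [h]

lemma l1Norm_indicator_add_compl (S : Finset (Fin d)) (x : Fin d → ℝ) :
    l1Norm ((S : Set (Fin d)).indicator x) + l1Norm ((S : Set (Fin d))ᶜ.indicator x) =
      l1Norm x := by
  rw [← coe_compl, l1Norm_indicator, l1Norm_indicator, sum_add_sum_compl]
  rfl

lemma euclNorm_indicator_le (S : Set (Fin d)) (x : Fin d → ℝ) :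
    euclNorm (S.indicator x) ≤ euclNorm x :=
  Real.sqrt_le_sqrt <| sum_le_sum fun i _ => by
    by_cases h : i ∈ S <;> simp [h, sq_nonneg]

lemma supp_indicator_subset (S : Finset (Fin d)) (x : Fin d → ℝ) :
    supp ((S : Set (Fin d)).indicator x) ⊆ S :=
  supp_subset_iff.2 fun i hi => Set.indicator_of_notMem (by simpa using hi) x

lemma abs_sum_rpow_le_sum_abs_rpow (hp0 : 0 < p) (hp1 : p ≤ 1) {ι : Type*} (t : Finset ι)
    (f : ι → ℝ) : |∑ j ∈ t, f j| ^ p ≤ ∑ j ∈ t, |f j| ^ p := by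
  induction t using Finset.cons_induction with
  | empty => simp [Real.zero_rpow hp0.ne']
  | cons a t ha ih =>
    rw [sum_cons, sum_cons]
    calc |f a + ∑ j ∈ t, f j| ^ p ≤ (|f a| + |∑ j ∈ t, f j|) ^ p := by
          gcongr
          exact abs_add_le _ _
      _ ≤ |f a| ^ p + |∑ j ∈ t, f j| ^ p :=
          Real.rpow_add_le_add_rpow (abs_nonneg _) (abs_nonneg _) hp0.le hp1
      _ ≤ |f a| ^ p + ∑ j ∈ t, |f j| ^ p := by gcongr

lemma sum_le_one_of_sum_rpow_eq_one (hp0 : 0 < p) (hp1 : p ≤ 1) {ι : Type*} {t : Finset ι}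
    {lam : ι → ℝ} (hlam : ∀ j ∈ t, 0 ≤ lam j) (hsum : ∑ j ∈ t, lam j ^ p = 1) :
    ∑ j ∈ t, lam j ≤ 1 := by
  have hle_one : ∀ j ∈ t, lam j ≤ 1 := fun j hj => by
    have : lam j ^ p ≤ 1 :=
      hsum ▸ single_le_sum (fun i hi => Real.rpow_nonneg (hlam i hi) p) hj
    exact (Real.rpow_le_rpow_iff (hlam j hj) zero_le_one hp0).1 (by rwa [Real.one_rpow])
  calc ∑ j ∈ t, lam j ≤ ∑ j ∈ t, lam j ^ p :=
        sum_le_sum fun j hj => Real.self_le_rpow_of_le_one (hlam j hj) (hle_one j hj) hp1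
    _ = 1 := hsum

lemma sum_abs_rpow_le_card_rpow_mul (hp0 : 0 < p) (hp2 : p < 2) {ι : Type*} (S : Finset ι)
    (t : ι → ℝ) :
    ∑ i ∈ S, |t i| ^ p ≤ (S.card : ℝ) ^ ((2 - p) / 2) * (∑ i ∈ S, t i ^ 2) ^ (p / 2) := by
  have hpq : Real.HolderConjugate (2 / p) (2 / (2 - p)) := by
    rw [Real.holderConjugate_iff]
    refine ⟨by rw [lt_div_iff₀ hp0]; linarith, ?_⟩
    rw [inv_div, inv_div]
    field_simp
    ring
  have H := Real.inner_le_Lp_mul_Lq_of_nonneg S (f := fun i => |t i| ^ p) (g := fun _ => 1) hpq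
    (fun i _ => by positivity) (fun _ _ => zero_le_one)
  have hsq : ∀ i, (|t i| ^ p) ^ (2 / p) = t i ^ 2 := fun i => by
    rw [← Real.rpow_mul (abs_nonneg _), mul_div_cancel₀ _ hp0.ne', Real.rpow_two, sq_abs]
  simp only [mul_one, hsq, Real.one_rpow, sum_const, nsmul_eq_mul, one_div_div] at H
  linarith

lemma l1Norm_le_interpolation (hp0 : 0 < p) (hp1 : p < 1) (x : Fin d → ℝ) :
    l1Norm x ≤ (∑ i, |x i| ^ p) ^ (1 / (2 - p)) * (∑ i, x i ^ 2) ^ ((1 - p) / (2 - p)) := by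
  have h2p : 0 < 2 - p := by linarith
  have hpq : Real.HolderConjugate (2 - p) ((2 - p) / (1 - p)) := by
    rw [Real.holderConjugate_iff]
    refine ⟨by linarith, ?_⟩
    rw [inv_div]
    field_simp
    ring
  have H := Real.inner_le_Lp_mul_Lq_of_nonneg univ
    (f := fun i => |x i| ^ (p / (2 - p))) (g := fun i => |x i| ^ (2 * (1 - p) / (2 - p))) hpq
    (fun i _ => by positivity) (fun i _ => by positivity)
  have hsplit : ∀ i, |x i| ^ (p / (2 - p)) * |x i| ^ (2 * (1 - p) / (2 - p)) = |x i| := fun i => by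
    rw [← Real.rpow_add_of_nonneg (abs_nonneg _) (by positivity) (by
      have : 0 < 1 - p := by linarith
      positivity)]
    rw [show p / (2 - p) + 2 * (1 - p) / (2 - p) = 1 by field_simp; ring, Real.rpow_one]
  have hf : ∀ i, (|x i| ^ (p / (2 - p))) ^ (2 - p) = |x i| ^ p := fun i => by
    rw [← Real.rpow_mul (abs_nonneg _), div_mul_cancel₀ _ h2p.ne']
  have hg : ∀ i, (|x i| ^ (2 * (1 - p) / (2 - p))) ^ ((2 - p) / (1 - p)) = x i ^ 2 := fun i => by
    rw [← Real.rpow_mul (abs_nonneg _),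
      show 2 * (1 - p) / (2 - p) * ((2 - p) / (1 - p)) = 2 by
        field_simp [(by linarith : (1 - p) ≠ 0)],
      Real.rpow_two, sq_abs]
  simp only [hsplit, hf, hg, one_div_div] at H
  exact H

lemma sum_abs_rpow_le_of_card_supp_le (hp0 : 0 < p) (hp2 : p < 2) {x : Fin d → ℝ}
    (hx : (supp x).card ≤ s) :
    ∑ i, |x i| ^ p ≤ (s : ℝ) ^ ((2 - p) / 2) * (∑ i, x i ^ 2) ^ (p / 2) := by
  rw [← sum_supp_eq_sum (x := x) fun i hi => by simp [hi, Real.zero_rpow hp0.ne'],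
    ← sum_supp_eq_sum (x := x) (g := fun i => x i ^ 2) fun i hi => by simp [hi]]
  refine (sum_abs_rpow_le_card_rpow_mul hp0 hp2 _ x).trans ?_
  gcongr

lemma sum_abs_rpow_le_of_mem_sparseSet_inter_euclBall (hp0 : 0 < p) (hp2 : p < 2)
    {t : Fin d → ℝ} (ht : t ∈ sparseSet d s ∩ euclBall d) :
    ∑ i, |t i| ^ p ≤ (s : ℝ) ^ ((2 - p) / 2) := by
  have hsq : ∑ i, t i ^ 2 ≤ 1 := by
    rw [← sq_euclNorm]
    exact pow_le_one₀ (euclNorm_nonneg t) ht.2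
  calc ∑ i, |t i| ^ p ≤ (s : ℝ) ^ ((2 - p) / 2) * (∑ i, t i ^ 2) ^ (p / 2) :=
        sum_abs_rpow_le_of_card_supp_le hp0 hp2 ht.1
    _ ≤ (s : ℝ) ^ ((2 - p) / 2) * 1 := by
        gcongr
        exact Real.rpow_le_one (by positivity) hsq (by positivity)
    _ = (s : ℝ) ^ ((2 - p) / 2) := mul_one _

lemma subset_pConvexHull (T : Set (Fin d → ℝ)) : T ⊆ pConvexHull p T := fun t ht =>
  ⟨1, fun _ => 1, fun _ => t, fun _ => ht, fun _ => zero_le_one, by simp, by simp⟩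

lemma pConvexHull_subset_euclBall (hp0 : 0 < p) (hp1 : p ≤ 1) {T : Set (Fin d → ℝ)}
    (hT : T ⊆ euclBall d) : pConvexHull p T ⊆ euclBall d := by
  rintro _ ⟨m, lam, t, ht, hlam, hsum, rfl⟩
  calc euclNorm (∑ j, lam j • t j) ≤ ∑ j, euclNorm (lam j • t j) := euclNorm_sum_le _ _
    _ = ∑ j, lam j * euclNorm (t j) := by
        simp only [euclNorm_smul, abs_of_nonneg (hlam _)]
    _ ≤ ∑ j, lam j := sum_le_sum fun j _ => mul_le_of_le_one_right (hlam j) (hT (ht j))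
    _ ≤ 1 := sum_le_one_of_sum_rpow_eq_one hp0 hp1 (fun j _ => hlam j) hsum

lemma sum_abs_rpow_le_of_mem_pConvexHull (hp0 : 0 < p) (hp1 : p ≤ 1) {T : Set (Fin d → ℝ)}
    {M : ℝ} (hT : ∀ t ∈ T, ∑ i, |t i| ^ p ≤ M) {y : Fin d → ℝ} (hy : y ∈ pConvexHull p T) :
    ∑ i, |y i| ^ p ≤ M := by
  obtain ⟨m, lam, t, ht, hlam, hsum, rfl⟩ := hy
  calc ∑ i, |(∑ j, lam j • t j) i| ^ p ≤ ∑ i, ∑ j, lam j ^ p * |t j i| ^ p := by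
        refine sum_le_sum fun i _ => ?_
        simp only [Finset.sum_apply, Pi.smul_apply, smul_eq_mul]
        refine (abs_sum_rpow_le_sum_abs_rpow hp0 hp1 _ _).trans_eq (sum_congr rfl fun j _ => ?_)
        rw [abs_mul, abs_of_nonneg (hlam j), Real.mul_rpow (hlam j) (abs_nonneg _)]
    _ = ∑ j, lam j ^ p * ∑ i, |t j i| ^ p := by
        rw [sum_comm]
        simp only [mul_sum]
    _ ≤ ∑ j, lam j ^ p * M :=
        sum_le_sum fun j _ => by
          gcongr
          · exact Real.rpow_nonneg (hlam j) p
          · exact hT _ (ht j)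
    _ = M := by rw [← sum_mul, hsum, one_mul]

lemma smul_pConvexHull_subset_Cset (hp0 : 0 < p) (hp1 : p ≤ 1) (hε : 0 ≤ ε)
    (hs : ε ^ p * (s : ℝ) ^ ((2 - p) / 2) ≤ 2) :
    ε • pConvexHull p (sparseSet d s ∩ euclBall d) ⊆ Cset d p ε := by
  rintro _ ⟨y, hy, rfl⟩
  refine ⟨?_, ?_⟩
  · calc ∑ i, |(ε • y) i| ^ p = ε ^ p * ∑ i, |y i| ^ p := by
          simp only [mul_sum, Pi.smul_apply, smul_eq_mul, abs_mul, abs_of_nonneg hε,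
            Real.mul_rpow hε (abs_nonneg _)]
      _ ≤ ε ^ p * (s : ℝ) ^ ((2 - p) / 2) := by
          gcongr
          exact sum_abs_rpow_le_of_mem_pConvexHull hp0 hp1
            (fun t ht => sum_abs_rpow_le_of_mem_sparseSet_inter_euclBall hp0 (by linarith) ht) hy
      _ ≤ 2 := hs
  · calc euclNorm (ε • y) = ε * euclNorm y := by rw [euclNorm_smul, abs_of_nonneg hε]
      _ ≤ ε := mul_le_of_le_one_right hε
          (pConvexHull_subset_euclBall hp0 hp1 Set.inter_subset_right hy)

lemma rpow_mul_rpow_le_two_of_eq_ceil (hp0 : 0 ≤ p) (hp2 : p < 2) (hε0 : 0 < ε) (hε1 : ε ≤ 1)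
    (hs : s = ⌈ε ^ (-(2 * p) / (2 - p))⌉₊) : ε ^ p * (s : ℝ) ^ ((2 - p) / 2) ≤ 2 := by
  set q := -(2 * p) / (2 - p)
  have hq : q ≤ 0 := div_nonpos_of_nonpos_of_nonneg (by linarith) (by linarith)
  have hs2 : (s : ℝ) ≤ 2 * ε ^ q := by
    have hceil : (s : ℝ) < ε ^ q + 1 := hs ▸ Nat.ceil_lt_add_one (by positivity)
    linarith [Real.one_le_rpow_of_pos_of_le_one_of_nonpos hε0 hε1 hq]
  have hcancel : ε ^ p * (ε ^ q) ^ ((2 - p) / 2) = 1 := by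
    rw [← Real.rpow_mul hε0.le, ← Real.rpow_add hε0,
      show p + q * ((2 - p) / 2) = 0 by simp only [q]; field_simp [(by linarith : 2 - p ≠ 0)]; ring,
      Real.rpow_zero]
  calc ε ^ p * (s : ℝ) ^ ((2 - p) / 2) ≤ ε ^ p * (2 * ε ^ q) ^ ((2 - p) / 2) := by
        gcongr
    _ = 2 ^ ((2 - p) / 2) := by
        rw [Real.mul_rpow zero_le_two (by positivity), mul_left_comm, hcancel, mul_one]
    _ ≤ 2 ^ (1 : ℝ) := Real.rpow_le_rpow_of_exponent_le one_le_two (by linarith)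
    _ = 2 := Real.rpow_one 2

lemma one_div_sqrt_le_rpow_of_eq_ceil (hp2 : p < 2) (hε0 : 0 < ε)
    (hs : s = ⌈ε ^ (-(2 * p) / (2 - p))⌉₊) : 1 / √s ≤ ε ^ (p / (2 - p)) := by
  have hroot : √(ε ^ (-(2 * p) / (2 - p))) = (ε ^ (p / (2 - p)))⁻¹ := by
    rw [Real.sqrt_eq_rpow, ← Real.rpow_mul hε0.le, ← Real.rpow_neg hε0.le]
    congr 1
    field_simp [(by linarith : 2 - p ≠ 0)]
  have hle : (ε ^ (p / (2 - p)))⁻¹ ≤ √s := hroot ▸ Real.sqrt_le_sqrt (hs ▸ Nat.le_ceil _)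
  rw [one_div]
  exact inv_le_of_inv_le₀ (by positivity) hle

lemma l1Norm_div_sqrt_le_of_mem_Cset (hp0 : 0 < p) (hp1 : p < 1) (hε0 : 0 < ε)
    (hs : 1 / √s ≤ ε ^ (p / (2 - p))) {x : Fin d → ℝ} (hx : x ∈ Cset d p ε) :
    l1Norm x / √s ≤ 2 * ε := by
  have h2p : 0 < 2 - p := by linarith
  have hsq : ∑ i, x i ^ 2 ≤ ε ^ 2 := by
    rw [← sq_euclNorm]
    exact pow_le_pow_left₀ (euclNorm_nonneg x) hx.2 2
  have hl1 : l1Norm x ≤ 2 ^ (1 / (2 - p)) * (ε ^ 2) ^ ((1 - p) / (2 - p)) := by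
    refine (l1Norm_le_interpolation hp0 hp1 x).trans ?_
    have : 0 ≤ 1 - p := by linarith
    gcongr
    exact hx.1
  have hpow : (ε ^ 2) ^ ((1 - p) / (2 - p)) * ε ^ (p / (2 - p)) = ε := by
    rw [← Real.rpow_natCast, ← Real.rpow_mul hε0.le, ← Real.rpow_add hε0,
      show ((2 : ℕ) : ℝ) * ((1 - p) / (2 - p)) + p / (2 - p) = 1 by
        push_cast; field_simp; ring,
      Real.rpow_one]
  calc l1Norm x / √s = l1Norm x * (1 / √s) := (mul_one_div _ _).symm
    _ ≤ 2 ^ (1 / (2 - p)) * (ε ^ 2) ^ ((1 - p) / (2 - p)) * ε ^ (p / (2 - p)) := by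
        gcongr
    _ = 2 ^ (1 / (2 - p)) * ε := by rw [mul_assoc, hpow]
    _ ≤ 2 ^ (1 : ℝ) * ε := by
        gcongr
        · exact one_le_two
        · rw [div_le_one h2p]; linarith
    _ = 2 * ε := by rw [Real.rpow_one]

def sparseHull (d s : ℕ) : Set (Fin d → ℝ) := convexHull ℝ (sparseSet d s ∩ euclBall d)

lemma zero_mem_sparseSet_inter_euclBall : (0 : Fin d → ℝ) ∈ sparseSet d s ∩ euclBall d :=
  ⟨by simp [mem_sparseSet, supp], by simp [mem_euclBall, euclNorm]⟩

lemma convex_sparseHull : Convex ℝ (sparseHull d s) := convex_convexHull ℝ _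

lemma zero_mem_sparseHull : (0 : Fin d → ℝ) ∈ sparseHull d s :=
  subset_convexHull ℝ _ zero_mem_sparseSet_inter_euclBall

lemma mem_smul_sparseHull_of_le {x : Fin d → ℝ} {a b : ℝ} (ha : 0 ≤ a) (hab : a ≤ b)
    (hx : x ∈ a • sparseHull d s) : x ∈ b • sparseHull d s :=
  convex_sparseHull.smul_subset_smul_of_le zero_mem_sparseHull ha hab hx

lemma add_mem_smul_sparseHull {x y : Fin d → ℝ} {a b : ℝ} (ha : 0 ≤ a) (hb : 0 ≤ b)
    (hx : x ∈ a • sparseHull d s) (hy : y ∈ b • sparseHull d s) :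
    x + y ∈ (a + b) • sparseHull d s := by
  rw [convex_sparseHull.add_smul ha hb]
  exact Set.add_mem_add hx hy

lemma mem_smul_sparseHull_of_card_supp_le {x : Fin d → ℝ} (hx : (supp x).card ≤ s) :
    x ∈ euclNorm x • sparseHull d s := by
  rcases (euclNorm_nonneg x).eq_or_lt with h0 | hpos
  · have : x = 0 := funext fun i => abs_nonpos_iff.1 (h0 ▸ abs_le_euclNorm x i)
    rw [← h0, this]
    exact ⟨0, zero_mem_sparseHull, smul_zero _⟩
  refine ⟨(euclNorm x)⁻¹ • x, subset_convexHull ℝ _ ⟨?_, ?_⟩, smul_inv_smul₀ hpos.ne' x⟩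
  · refine (card_le_card (supp_subset_iff.2 fun i hi => ?_)).trans hx
    simpa [mem_supp, hpos.ne'] using hi
  · rw [mem_euclBall, euclNorm_smul, abs_inv, abs_of_pos hpos, inv_mul_cancel₀ hpos.ne']

lemma card_supp_indicator_compl_lt {x : Fin d → ℝ} {S : Finset (Fin d)} (hS : S ⊆ supp x)
    (hne : S.Nonempty) : (supp ((S : Set (Fin d))ᶜ.indicator x)).card < (supp x).card := by
  obtain ⟨i, hi⟩ := hne
  refine card_lt_card ((ssubset_iff_of_subset fun j hj => ?_).2 ⟨i, hS hi, ?_⟩)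
  · rw [mem_supp] at hj ⊢
    exact fun h => hj (by simp [h])
  · simp [mem_supp, hi]

lemma card_mul_abs_indicator_compl_le {x : Fin d → ℝ} {S : Finset (Fin d)}
    (htop : ∀ i ∈ S, ∀ j ∈ supp x \ S, |x j| ≤ |x i|) (j : Fin d) :
    S.card * |(S : Set (Fin d))ᶜ.indicator x j| ≤ ∑ i ∈ S, |x i| := by
  by_cases hj : j ∈ supp x \ S
  · rw [Set.indicator_of_mem (by simpa using (mem_sdiff.1 hj).2), ← nsmul_eq_mul, ← sum_const]
    exact sum_le_sum fun i hi => htop i hi j hj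
  · have : (S : Set (Fin d))ᶜ.indicator x j = 0 := by
      by_cases hjS : j ∈ S
      · exact Set.indicator_of_notMem (by simpa using hjS) x
      · simpa [hjS, mem_supp] using hj
    rw [this, abs_zero, mul_zero]
    exact sum_nonneg fun i _ => abs_nonneg _

lemma add_indicator_mem_smul_sparseHull {x : Fin d → ℝ} {S : Finset (Fin d)} (hS : S.card ≤ s)
    (hz : (S : Set (Fin d))ᶜ.indicator x ∈ (l1Norm ((S : Set (Fin d)).indicator x) / √s +
      l1Norm ((S : Set (Fin d))ᶜ.indicator x) / √s) • sparseHull d s) :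
    x ∈ (euclNorm ((S : Set (Fin d)).indicator x) + l1Norm x / √s) • sparseHull d s := by
  have hy := mem_smul_sparseHull_of_card_supp_le
    ((card_le_card (supp_indicator_subset S x)).trans hS)
  have hyz := add_mem_smul_sparseHull (euclNorm_nonneg _)
    (add_nonneg (div_nonneg (l1Norm_nonneg _) (Real.sqrt_nonneg _))
      (div_nonneg (l1Norm_nonneg _) (Real.sqrt_nonneg _))) hy hz
  rwa [← add_div, l1Norm_indicator_add_compl, Set.indicator_self_add_compl] at hyz

/-- The entrywise bound `μ` is the induction invariant: after the `s` largest entries `y` are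
split off, the remainder is bounded entrywise by `‖y‖₁ / s`. -/
lemma mem_smul_sparseHull_of_abs_le (hs : 1 ≤ s) (x : Fin d → ℝ) {μ : ℝ} (hμ : 0 ≤ μ)
    (hb : ∀ i, |x i| ≤ μ) :
    x ∈ (min (euclNorm x) (√s * μ) + l1Norm x / √s) • sparseHull d s := by
  induction hn : (supp x).card using Nat.strong_induction_on generalizing x μ with
  | _ n ih =>
  have hsqrt : 0 < √(s : ℝ) := Real.sqrt_pos.2 (by exact_mod_cast hs)
  have hl1 : ∀ v : Fin d → ℝ, 0 ≤ l1Norm v / √s := fun v => div_nonneg (l1Norm_nonneg v) hsqrt.le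
  have hmin : ∀ (v : Fin d → ℝ) {ν : ℝ}, 0 ≤ ν → 0 ≤ min (euclNorm v) (√s * ν) := fun v ν hν =>
    le_min (euclNorm_nonneg v) (mul_nonneg hsqrt.le hν)
  by_cases hsmall : n ≤ s
  · have hx := mem_smul_sparseHull_of_card_supp_le (hn ▸ hsmall)
    rw [← min_eq_left (euclNorm_le_sqrt_mul hμ (hn ▸ hsmall) hb)] at hx
    exact mem_smul_sparseHull_of_le (hmin x hμ) (le_add_of_nonneg_right (hl1 x)) hx
  obtain ⟨S, hSsupp, hScard, htop⟩ :=
    exists_subset_card_eq_forall_le (fun i => |x i|) (U := supp x) (k := s) (by omega)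
  set y := (S : Set (Fin d)).indicator x
  set z := (S : Set (Fin d))ᶜ.indicator x
  have hz_abs : ∀ j, |z j| ≤ l1Norm y / s := fun j => by
    rw [le_div_iff₀ (by exact_mod_cast hs), mul_comm, l1Norm_indicator, ← hScard]
    exact card_mul_abs_indicator_compl_le htop j
  have hz_card : (supp z).card < n :=
    hn ▸ card_supp_indicator_compl_lt hSsupp (card_pos.1 (by omega))
  have hν : 0 ≤ l1Norm y / s := div_nonneg (l1Norm_nonneg y) s.cast_nonneg
  have hroot : √s * (l1Norm y / s) = l1Norm y / √s := by
    field_simp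
    rw [Real.sq_sqrt s.cast_nonneg, mul_comm]
  have hz := mem_smul_sparseHull_of_le (b := l1Norm y / √s + l1Norm z / √s)
    (add_nonneg (hmin z hν) (hl1 z))
    (by rw [← hroot]; gcongr; exact min_le_right _ _) (ih _ hz_card z hν hz_abs rfl)
  have hy_le : euclNorm y ≤ min (euclNorm x) (√s * μ) := by
    refine le_min (euclNorm_indicator_le _ x) (euclNorm_le_sqrt_mul hμ
      ((card_le_card (supp_indicator_subset S x)).trans hScard.le) fun i => ?_)
    by_cases h : i ∈ S <;> simp [y, h, hb i, hμ]
  exact mem_smul_sparseHull_of_le (add_nonneg (euclNorm_nonneg y) (hl1 x)) (by gcongr)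
    (add_indicator_mem_smul_sparseHull hScard.le hz)

lemma mem_smul_sparseHull (hs : 1 ≤ s) (x : Fin d → ℝ) :
    x ∈ (euclNorm x + l1Norm x / √s) • sparseHull d s :=
  mem_smul_sparseHull_of_le
    (add_nonneg (le_min (euclNorm_nonneg x) (mul_nonneg (Real.sqrt_nonneg _) (l1Norm_nonneg x)))
      (div_nonneg (l1Norm_nonneg x) (Real.sqrt_nonneg _)))
    (by gcongr; exact min_le_left _ _)
    (mem_smul_sparseHull_of_abs_le hs x (l1Norm_nonneg x) (abs_le_l1Norm x))

lemma Cset_subset_smul_sparseHull (hp0 : 0 < p) (hp1 : p < 1) (hε0 : 0 < ε) (hs : 1 ≤ s)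
    (hsε : 1 / √s ≤ ε ^ (p / (2 - p))) : Cset d p ε ⊆ (3 * ε) • sparseHull d s := fun x hx => by
  have h2 : euclNorm x ≤ ε := hx.2
  have h1 := l1Norm_div_sqrt_le_of_mem_Cset hp0 hp1 hε0 hsε hx
  exact mem_smul_sparseHull_of_le
    (add_nonneg (euclNorm_nonneg x) (div_nonneg (l1Norm_nonneg x) (Real.sqrt_nonneg _)))
    (by linarith) (mem_smul_sparseHull hs x)

lemma dotProduct_le_l1Norm_mul_norm (x ξ : Fin d → ℝ) : x ⬝ᵥ ξ ≤ l1Norm x * ‖ξ‖ := by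
  rw [l1Norm, sum_mul]
  refine sum_le_sum fun i _ => (le_abs_self _).trans ?_
  rw [abs_mul, ← Real.norm_eq_abs (ξ i)]
  gcongr
  exact norm_le_pi_norm ξ i

lemma bddAbove_dotProduct_image {C : Set (Fin d → ℝ)} {L : ℝ} (hC : ∀ x ∈ C, l1Norm x ≤ L)
    (ξ : Fin d → ℝ) : BddAbove ((· ⬝ᵥ ξ) '' C) := by
  refine ⟨L * ‖ξ‖, ?_⟩
  rintro _ ⟨x, hx, rfl⟩
  exact (dotProduct_le_l1Norm_mul_norm x ξ).trans (by gcongr; exact hC x hx)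

lemma lipschitzWith_sSup_dotProduct_image {C : Set (Fin d → ℝ)} {L : ℝ} (hne : C.Nonempty)
    (hC : ∀ x ∈ C, l1Norm x ≤ L) :
    LipschitzWith L.toNNReal fun ξ => sSup ((· ⬝ᵥ ξ) '' C) := by
  refine LipschitzWith.of_le_add_mul' L fun ξ ξ' => csSup_le (hne.image _) ?_
  rintro _ ⟨x, hx, rfl⟩
  calc x ⬝ᵥ ξ = x ⬝ᵥ ξ' + x ⬝ᵥ (ξ - ξ') := by rw [dotProduct_sub]; ring
    _ ≤ sSup ((· ⬝ᵥ ξ') '' C) + L * dist ξ ξ' := by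
        gcongr
        · exact le_csSup (bddAbove_dotProduct_image hC ξ') ⟨x, hx, rfl⟩
        · rw [dist_eq_norm]
          exact (dotProduct_le_l1Norm_mul_norm x _).trans (by gcongr; exact hC x hx)

lemma zero_mem_Cset (hp0 : 0 < p) (hε : 0 ≤ ε) : (0 : Fin d → ℝ) ∈ Cset d p ε :=
  ⟨by simp [Real.zero_rpow hp0.ne'], by simpa using hε⟩

lemma l1Norm_le_of_mem_Cset {x : Fin d → ℝ} (hx : x ∈ Cset d p ε) : l1Norm x ≤ d * ε :=
  calc l1Norm x ≤ ∑ _i : Fin d, ε := sum_le_sum fun i _ => (abs_le_euclNorm x i).trans hx.2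
    _ = d * ε := by simp

lemma le_Phi {x : Fin d → ℝ} (hx : x ∈ Cset d p ε) (ξ : Fin d → ℝ) : x ⬝ᵥ ξ ≤ Phi p ε ξ :=
  le_csSup (bddAbove_dotProduct_image (fun _ => l1Norm_le_of_mem_Cset) ξ) ⟨x, hx, rfl⟩

lemma Phi_nonneg (hp0 : 0 < p) (hε : 0 ≤ ε) (ξ : Fin d → ℝ) : 0 ≤ Phi p ε ξ := by
  simpa using le_Phi (zero_mem_Cset hp0 hε) ξ

lemma continuous_Phi (hp0 : 0 < p) (hε : 0 ≤ ε) : Continuous (Phi (d := d) p ε) :=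
  (lipschitzWith_sSup_dotProduct_image ⟨0, zero_mem_Cset hp0 hε⟩
    fun _ => l1Norm_le_of_mem_Cset).continuous

def sparseSqSup (d s : ℕ) (ξ : Fin d → ℝ) : ℝ :=
  ⨆ S ∈ {S : Finset (Fin d) | S.card ≤ s}, ∑ i ∈ S, ξ i ^ 2

lemma sum_sq_le_sparseSqSup {ξ : Fin d → ℝ} {S : Finset (Fin d)} (hS : S.card ≤ s) :
    ∑ i ∈ S, ξ i ^ 2 ≤ sparseSqSup d s ξ := by
  refine le_ciSup_of_le (Set.finite_range _).bddAbove S ?_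
  rw [ciSup_pos (show S ∈ {S : Finset (Fin d) | S.card ≤ s} from hS)]

-- For `S.card > s` the inner supremum is over an empty type, hence `0` in `ℝ`.
lemma sparseSqSup_le {ξ : Fin d → ℝ} {a : ℝ}
    (h : ∀ S : Finset (Fin d), S.card ≤ s → ∑ i ∈ S, ξ i ^ 2 ≤ a) (ha : 0 ≤ a) :
    sparseSqSup d s ξ ≤ a :=
  Real.iSup_le (fun S => Real.iSup_le (h S) ha) ha

lemma sparseSqSup_nonneg (ξ : Fin d → ℝ) : 0 ≤ sparseSqSup d s ξ := by
  simpa using sum_sq_le_sparseSqSup (ξ := ξ) (S := ∅) (s.zero_le)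

lemma integrable_sq_eval (i : Fin d) :
    Integrable (fun ξ : Fin d → ℝ => ξ i ^ 2) (stdGaussian d) :=
  (measurePreserving_eval (fun _ => gaussianReal 0 1) i).integrable_comp_of_integrable
    (memLp_id_gaussianReal 2).integrable_sq

lemma integrable_sparseSqSup : Integrable (sparseSqSup d s) (stdGaussian d) := by
  refine (integrable_finsetSum univ fun i _ => integrable_sq_eval i).mono'
    (by unfold sparseSqSup; fun_prop : Measurable _).aestronglyMeasurable (ae_of_all _ fun ξ => ?_)
  rw [Real.norm_eq_abs, abs_of_nonneg (sparseSqSup_nonneg ξ)]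
  exact sparseSqSup_le (fun S _ => sum_le_sum_of_subset_of_nonneg (subset_univ S)
    fun i _ _ => sq_nonneg _) (sum_nonneg fun i _ => sq_nonneg _)

lemma dotProduct_le_sqrt_sparseSqSup {t : Fin d → ℝ} (ht : t ∈ sparseSet d s ∩ euclBall d)
    (ξ : Fin d → ℝ) : t ⬝ᵥ ξ ≤ √(sparseSqSup d s ξ) :=
  calc t ⬝ᵥ ξ = ∑ i ∈ supp t, t i * ξ i := (sum_supp_eq_sum fun i hi => by simp [hi]).symm
    _ ≤ √(∑ i ∈ supp t, t i ^ 2) * √(∑ i ∈ supp t, ξ i ^ 2) :=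
        Real.sum_mul_le_sqrt_mul_sqrt _ _ _
    _ ≤ 1 * √(sparseSqSup d s ξ) := by
        rw [sum_supp_eq_sum fun i hi => by simp [hi]]
        gcongr
        · exact ht.2
        · exact sum_sq_le_sparseSqSup ht.1
    _ = √(sparseSqSup d s ξ) := one_mul _

lemma dotProduct_le_sqrt_sparseSqSup_of_mem_sparseHull {y : Fin d → ℝ}
    (hy : y ∈ sparseHull d s) (ξ : Fin d → ℝ) : y ⬝ᵥ ξ ≤ √(sparseSqSup d s ξ) :=
  convexHull_min (t := {w | w ⬝ᵥ ξ ≤ √(sparseSqSup d s ξ)})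
    (fun _ ht => dotProduct_le_sqrt_sparseSqSup ht ξ)
    (convex_halfSpace_le ⟨fun u v => add_dotProduct u v ξ, fun c u => smul_dotProduct c u ξ⟩ _) hy

lemma indicator_dotProduct_self (S : Finset (Fin d)) (ξ : Fin d → ℝ) :
    (S : Set (Fin d)).indicator ξ ⬝ᵥ ξ = ∑ i ∈ S, ξ i ^ 2 := by
  rw [dotProduct, ← sum_indicator_subset _ (subset_univ S)]
  exact sum_congr rfl fun i _ => by by_cases h : i ∈ S <;> simp [h, sq]

lemma euclNorm_indicator (S : Finset (Fin d)) (ξ : Fin d → ℝ) :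
    euclNorm ((S : Set (Fin d)).indicator ξ) = √(∑ i ∈ S, ξ i ^ 2) := by
  rw [euclNorm, ← sum_indicator_subset _ (subset_univ S)]
  congr 1
  exact sum_congr rfl fun i _ => by by_cases h : i ∈ S <;> simp [h]

lemma exists_mem_dotProduct_eq_sqrt {S : Finset (Fin d)} (hS : S.card ≤ s) (ξ : Fin d → ℝ) :
    ∃ t ∈ sparseSet d s ∩ euclBall d, t ⬝ᵥ ξ = √(∑ i ∈ S, ξ i ^ 2) := by
  rcases (Real.sqrt_nonneg (∑ i ∈ S, ξ i ^ 2)).eq_or_lt with h0 | hr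
  · exact ⟨0, zero_mem_sparseSet_inter_euclBall, by simp [← h0]⟩
  refine ⟨(√(∑ i ∈ S, ξ i ^ 2))⁻¹ • (S : Set (Fin d)).indicator ξ, ⟨?_, ?_⟩, ?_⟩
  · refine (card_le_card (supp_subset_iff.2 fun i hi => ?_)).trans hS
    simp [Set.indicator_of_notMem (show i ∉ (S : Set (Fin d)) by simpa using hi)]
  · rw [mem_euclBall, euclNorm_smul, euclNorm_indicator, abs_inv, abs_of_pos hr,
      inv_mul_cancel₀ hr.ne']
  · rw [smul_dotProduct, indicator_dotProduct_self, smul_eq_mul, inv_mul_eq_div, Real.div_sqrt]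

lemma sq_mul_sparseSqSup_le_Phi_sq (hε : 0 < ε)
    (h : ε • pConvexHull p (sparseSet d s ∩ euclBall d) ⊆ Cset d p ε) (ξ : Fin d → ℝ) :
    ε ^ 2 * sparseSqSup d s ξ ≤ Phi p ε ξ ^ 2 := by
  have hS : ∀ S : Finset (Fin d), S.card ≤ s → ∑ i ∈ S, ξ i ^ 2 ≤ (Phi p ε ξ / ε) ^ 2 := by
    intro S hS
    obtain ⟨t, ht, hdot⟩ := exists_mem_dotProduct_eq_sqrt hS ξ
    have hεt := le_Phi (h (Set.smul_mem_smul_set (subset_pConvexHull _ ht))) ξ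
    rw [smul_dotProduct, hdot, smul_eq_mul, ← le_div_iff₀' hε] at hεt
    exact (Real.sqrt_le_iff.1 hεt).2
  calc ε ^ 2 * sparseSqSup d s ξ ≤ ε ^ 2 * (Phi p ε ξ / ε) ^ 2 := by
        gcongr
        exact sparseSqSup_le hS (sq_nonneg _)
    _ = Phi p ε ξ ^ 2 := by field_simp

lemma Phi_le_mul_sqrt_sparseSqSup {c : ℝ} (hc : 0 ≤ c)
    (h : Cset d p ε ⊆ c • sparseHull d s) (ξ : Fin d → ℝ) :
    Phi p ε ξ ≤ c * √(sparseSqSup d s ξ) := by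
  refine Real.sSup_le ?_ (by positivity)
  rintro _ ⟨x, hx, rfl⟩
  obtain ⟨y, hy, rfl⟩ := h hx
  change (c • y) ⬝ᵥ ξ ≤ _
  rw [smul_dotProduct, smul_eq_mul]
  exact mul_le_mul_of_nonneg_left (dotProduct_le_sqrt_sparseSqSup_of_mem_sparseHull hy ξ) hc

end LpBall

open LpBall

/-- Sharp local structure of ℓp balls for `p ∈ (0,1)`: with
`s = ⌈ε^{-2p/(2-p)}⌉` one has
`ε·conv_p(B₀(s) ∩ B₂) ⊆ C_d(p,ε) ⊆ 3ε·conv(B₀(s) ∩ B₂)`, and consequently the second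
moment of `Φ_{p,ε}` is, up to a factor `9`, given by `ε²·E[max_{|S| ≤ s} ‖ξ_S‖₂²]`. -/
theorem local_structure_lp_ball (d : ℕ) (hd : 1 ≤ d) (p : ℝ) (hp0 : 0 < p) (hp1 : p < 1)
    (ε : ℝ) (hε1 : (d : ℝ) ^ (-((2 - p) / (2 * p))) ≤ ε) (hε2 : ε ≤ 1)
    (s : ℕ) (hs : s = ⌈ε ^ (-(2 * p) / (2 - p))⌉₊) :
    (ε • pConvexHull p (sparseSet d s ∩ euclBall d) ⊆ Cset d p ε ∧
      Cset d p ε ⊆ (3 * ε) • convexHull ℝ (sparseSet d s ∩ euclBall d)) ∧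
    (ε ^ 2 *
        ∫ ξ, (⨆ S ∈ {S : Finset (Fin d) | S.card ≤ s}, ∑ i ∈ S, ξ i ^ 2) ∂(stdGaussian d)
      ≤ ∫ ξ, Phi p ε ξ ^ 2 ∂(stdGaussian d) ∧
      ∫ ξ, Phi p ε ξ ^ 2 ∂(stdGaussian d)
      ≤ 9 * ε ^ 2 *
        ∫ ξ, (⨆ S ∈ {S : Finset (Fin d) | S.card ≤ s}, ∑ i ∈ S, ξ i ^ 2)
          ∂(stdGaussian d)) := by
  have hε0 : 0 < ε := (Real.rpow_pos_of_pos (by exact_mod_cast hd) _).trans_le hε1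
  have hs1 : 1 ≤ s := hs ▸ Nat.ceil_pos.2 (Real.rpow_pos_of_pos hε0 _)
  have hinner := smul_pConvexHull_subset_Cset (d := d) hp0 hp1.le hε0.le
    (rpow_mul_rpow_le_two_of_eq_ceil hp0.le (by linarith) hε0 hε2 hs)
  have houter := Cset_subset_smul_sparseHull (d := d) hp0 hp1 hε0 hs1
    (one_div_sqrt_le_rpow_of_eq_ceil (by linarith) hε0 hs)
  have hlower := sq_mul_sparseSqSup_le_Phi_sq hε0 hinner
  have hupper : ∀ ξ, Phi p ε ξ ^ 2 ≤ 9 * ε ^ 2 * sparseSqSup d s ξ := fun ξ =>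
    calc Phi p ε ξ ^ 2 ≤ (3 * ε * √(sparseSqSup d s ξ)) ^ 2 :=
          pow_le_pow_left₀ (Phi_nonneg hp0 hε0.le ξ)
            (Phi_le_mul_sqrt_sparseSqSup (by positivity) houter ξ) 2
      _ = 9 * ε ^ 2 * sparseSqSup d s ξ := by
          rw [mul_pow, Real.sq_sqrt (sparseSqSup_nonneg ξ)]
          ring
  have hN := integrable_sparseSqSup (d := d) (s := s)
  have hPhi : Integrable (fun ξ => Phi p ε ξ ^ 2) (stdGaussian d) :=
    (hN.const_mul _).mono' ((continuous_Phi hp0 hε0.le).pow 2).aestronglyMeasurable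
      (ae_of_all _ fun ξ => by rw [Real.norm_eq_abs, abs_sq]; exact hupper ξ)
  refine ⟨⟨hinner, houter⟩, ?_, ?_⟩
  · rw [← integral_const_mul]
    exact integral_mono (hN.const_mul _) hPhi hlower
  · rw [← integral_const_mul]
    exact integral_mono hPhi (hN.const_mul _) hupper
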